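/- arXiv:2109.07425 — 5 statements merged into one kernel-verified Lean document; each statement's English description precedes it below -/
import Mathlib

section
/- Let Λ be a free ℤ-module of rank 2 equipped with a nondegenerate symmetric bilinear form q that represents 0 nontrivially. Let α ∈ Λ be a primitive isotropic vector and let β ∈ Λ be such that {α, β} is a ℤ-basis of Λ and q(β,β) ≥ 0; set d := |q(α,β)| (so d > 0, and the discriminant of Λ equals −d²). Then every γ ∈ Λ with q(γ,γ) < 0 satisfies (1 + q(β,β)) · q(γ,γ) ≤ −2d. -/
/-!
In the basis `{α, β}` the form is `q(xα + yβ) = 2xy·q(α,β) + y²·q(β,β)`, since `α` is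
isotropic. If this is negative then `xy·q(α,β) < 0`, so with `k = |x|`, `m = |y|` and
`d = |q(α,β)|` it equals `-m·t`, where `t = 2kd - m·q(β,β)` is a positive integer.
Then `m·t ≥ t ≥ 2d - m·q(β,β)` and `q(β,β)·m·t ≥ m·q(β,β)`; adding the two gives the bound.
-/

lemma one_add_mul_sq_mul_sub_le {k m d B : ℤ} (hk : 1 ≤ k) (hm : 1 ≤ m) (hB : 0 ≤ B)
    (hneg : m ^ 2 * B - 2 * k * m * d < 0) :
    (1 + B) * (m ^ 2 * B - 2 * k * m * d) ≤ -2 * d := by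
  set t := 2 * k * d - m * B
  have hmt : 0 < m * t := by linarith [show m * t = -(m ^ 2 * B - 2 * k * m * d) by ring]
  have ht : 1 ≤ t := pos_of_mul_pos_right hmt (by linarith)
  have hd : 0 ≤ d := by nlinarith
  have hmt_ge : 2 * d - m * B ≤ m * t := by nlinarith
  have hBmt_ge : m * B ≤ B * (m * t) :=
    calc m * B = B * (m * 1) := by ring
      _ ≤ B * (m * t) := by gcongr
  calc (1 + B) * (m ^ 2 * B - 2 * k * m * d) = -(m * t) - B * (m * t) := by ring
    _ ≤ -2 * d := by linarith

lemma one_add_mul_le_neg_two_mul_abs {x y e B : ℤ} (hB : 0 ≤ B)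
    (hneg : 2 * x * y * e + y ^ 2 * B < 0) :
    (1 + B) * (2 * x * y * e + y ^ 2 * B) ≤ -2 * |e| := by
  have hxye : x * y * e < 0 := by nlinarith [sq_nonneg y]
  have hx : x ≠ 0 := by rintro rfl; simp at hxye
  have hy : y ≠ 0 := by rintro rfl; simp at hxye
  have habs : x * y * e = -(|x| * |y| * |e|) := by
    rw [← abs_mul, ← abs_mul, abs_of_neg hxye, neg_neg]
  have hform : 2 * x * y * e + y ^ 2 * B = |y| ^ 2 * B - 2 * |x| * |y| * |e| := by
    rw [sq_abs]; linear_combination 2 * habs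
  rw [hform] at hneg ⊢
  exact one_add_mul_sq_mul_sub_le (Int.one_le_abs hx) (Int.one_le_abs hy) hB hneg

lemma apply_smul_add_smul_self_of_isotropic {R M : Type*} [CommRing R] [AddCommGroup M]
    [Module R M] (q : M →ₗ[R] M →ₗ[R] R) {α β : M} (hα : q α α = 0)
    (hsymm : q β α = q α β) (x y : R) :
    q (x • α + y • β) (x • α + y • β) = 2 * x * y * q α β + y ^ 2 * q β β := by
  simp only [map_add, map_smul, LinearMap.add_apply, LinearMap.smul_apply, smul_eq_mul, hα,
    hsymm]
  ring

theorem stmt0_general (Λ : Type*) [AddCommGroup Λ] [Module ℤ Λ]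
    (q : Λ →ₗ[ℤ] Λ →ₗ[ℤ] ℤ)
    (hsymm : ∀ x y : Λ, q x y = q y x)
    (b : Module.Basis (Fin 2) ℤ Λ) (α β : Λ)
    (hbα : b 0 = α) (hbβ : b 1 = β)
    (hiso : q α α = 0)
    (hβ : 0 ≤ q β β)
    (d : ℤ) (hd : d = |q α β|) :
    ∀ γ : Λ, q γ γ < 0 → (1 + q β β) * q γ γ ≤ -2 * d := by
  intro γ hγ
  have hγ_eq := b.sum_repr γ
  rw [Fin.sum_univ_two, hbα, hbβ] at hγ_eq
  rw [← hγ_eq, apply_smul_add_smul_self_of_isotropic q hiso (hsymm β α)] at hγ ⊢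
  exact hd ▸ one_add_mul_le_neg_two_mul_abs hβ hγ

/-- Let Λ be a free ℤ-module of rank 2 with a nondegenerate symmetric
bilinear form `q` that represents 0 nontrivially. Let `α` be a primitive isotropic
vector, `β` such that `{α, β}` is a ℤ-basis and `q(β,β) ≥ 0`, and `d := |q(α,β)|`.
Then every `γ` with `q(γ,γ) < 0` satisfies `(1 + q(β,β)) * q(γ,γ) ≤ -2d`. -/
theorem stmt0 (Λ : Type*) [AddCommGroup Λ] [Module ℤ Λ]
    (q : Λ →ₗ[ℤ] Λ →ₗ[ℤ] ℤ)
    (hsymm : ∀ x y : Λ, q x y = q y x)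
    (hnondeg : ∀ x : Λ, (∀ y : Λ, q x y = 0) → x = 0)
    (hrep : ∃ x : Λ, x ≠ 0 ∧ q x x = 0)
    (b : Module.Basis (Fin 2) ℤ Λ) (α β : Λ)
    (hbα : b 0 = α) (hbβ : b 1 = β)
    (hiso : q α α = 0)
    (hprim : ¬ ∃ (m : ℤ) (δ : Λ), 2 ≤ |m| ∧ α = m • δ)
    (hβ : 0 ≤ q β β)
    (d : ℤ) (hd : d = |q α β|) :
    ∀ γ : Λ, q γ γ < 0 → (1 + q β β) * q γ γ ≤ -2 * d :=
  stmt0_general Λ q hsymm b α β hbα hbβ hiso hβ d hd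
end

section
/- Let Λ = ℤh ⊕ ℤf be a rank-2 lattice with symmetric bilinear form q determined by q(h,h) = e, q(h,f) = d and q(f,f) = 0, where d is a positive integer and e is an integer. Set g := gcd(2d, e) and α := (1/g)(2d·h − e·f) ∈ Λ. Then: (1) every isotropic vector of Λ is an integer multiple of f or an integer multiple of α; (2) q(α,h) = de/g; (3) if e does not divide 2d, then f is the unique isotropic vector γ ∈ Λ with q(γ,h) = d. -/
/-!
Write `γ = x • h + y • f`, so that `q γ γ = x * (x * e + 2 * d * y)`. Either `x = 0`, and `γ` is a
multiple of `f`, or `x * e + 2 * d * y = 0`; dividing by `g = gcd (2 * d) e` leaves coprime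
coefficients, so `(x, y)` is a multiple of `(2 * d / g, -(e / g))`, the coordinates of `α`.
For (3), an isotropic `γ = m • α` with `q γ h = d` forces `m * (e / g) = 1`, so `e = ± g` divides `2 * d`.
-/

theorem Int.exists_eq_mul_ediv_gcd_of_mul_add_mul_eq_zero {a b x y : ℤ} (ha : a ≠ 0)
    (hxy : x * b + a * y = 0) :
    ∃ m : ℤ, x = m * (a / a.gcd b) ∧ y = -(m * (b / a.gcd b)) := by
  have hg : 0 < a.gcd b := Int.gcd_pos_of_ne_zero_left b ha
  obtain ⟨a', ha'⟩ : (a.gcd b : ℤ) ∣ a := Int.gcd_dvd_left _ _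
  obtain ⟨b', hb'⟩ : (a.gcd b : ℤ) ∣ b := Int.gcd_dvd_right _ _
  have hg0 : (a.gcd b : ℤ) ≠ 0 := by exact_mod_cast hg.ne'
  have hdiv_a : a / a.gcd b = a' := Int.ediv_eq_of_eq_mul_left hg0 (by linear_combination ha')
  have hdiv_b : b / a.gcd b = b' := Int.ediv_eq_of_eq_mul_left hg0 (by linear_combination hb')
  have hcop : IsCoprime a' b' := by
    rw [← hdiv_a, ← hdiv_b, Int.isCoprime_iff_gcd_eq_one]
    exact Int.gcd_div_gcd_div_gcd hg
  have hxy' : x * b' + a' * y = 0 := by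
    have : (a.gcd b : ℤ) * (x * b' + a' * y) = 0 := by linear_combination hxy - x * hb' - y * ha'
    exact (mul_eq_zero.mp this).resolve_left hg0
  obtain ⟨m, rfl⟩ : a' ∣ x := hcop.dvd_of_dvd_mul_right ⟨-y, by linear_combination hxy'⟩
  have ha'0 : a' ≠ 0 := by rintro rfl; exact ha (by rw [ha', mul_zero])
  refine ⟨m, by rw [hdiv_a, mul_comm], ?_⟩
  rw [hdiv_b]
  exact mul_left_cancel₀ ha'0 (by linear_combination hxy')

theorem Int.dvd_of_isUnit_ediv_gcd {a b : ℤ} (hu : IsUnit (b / a.gcd b)) : b ∣ a := by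
  rw [← Int.ediv_mul_cancel (Int.gcd_dvd_right a b), hu.mul_left_dvd]
  exact Int.gcd_dvd_left a b

theorem eq_ediv_gcd_zsmul_sub_ediv_gcd_zsmul {G : Type*} [AddCommGroup G] [IsAddTorsionFree G]
    {a c : ℤ} (ha : a ≠ 0) {α h f : G} (hα : (a.gcd c : ℤ) • α = a • h - c • f) :
    α = (a / a.gcd c) • h - (c / a.gcd c) • f := by
  have hg0 : (a.gcd c : ℤ) ≠ 0 := by exact_mod_cast (Int.gcd_pos_of_ne_zero_left c ha).ne'
  refine zsmul_right_injective hg0 ?_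
  simp only [hα, smul_sub, smul_smul, Int.mul_ediv_cancel' (Int.gcd_dvd_left a c),
    Int.mul_ediv_cancel' (Int.gcd_dvd_right a c)]

theorem Module.Basis.exists_eq_zsmul_add_zsmul {Λ : Type*} [AddCommGroup Λ] [Module ℤ Λ]
    (b : Module.Basis (Fin 2) ℤ Λ) (γ : Λ) : ∃ x y : ℤ, γ = x • b 0 + y • b 1 := by
  refine ⟨b.repr γ 0, b.repr γ 1, ?_⟩
  conv_lhs => rw [← b.sum_repr γ]
  simp only [Fin.sum_univ_two, ← Int.cast_smul_eq_zsmul ℤ, Int.cast_id]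

section
variable {Λ : Type*} [AddCommGroup Λ] [Module ℤ Λ] (q : Λ →ₗ[ℤ] Λ →ₗ[ℤ] ℤ) {h f : Λ} {e d : ℤ}

theorem apply_zsmul_add_zsmul_self (qhh : q h h = e) (qhf : q h f = d) (qfh : q f h = d)
    (qff : q f f = 0) (x y : ℤ) :
    q (x • h + y • f) (x • h + y • f) = x * (x * e + 2 * d * y) := by
  simp only [map_add, map_zsmul, LinearMap.add_apply, LinearMap.smul_apply, smul_eq_mul,
    qhh, qhf, qfh, qff]
  ring

theorem eq_zsmul_or_eq_zsmul_of_apply_self_eq_zero [IsAddTorsionFree Λ]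
    (b : Module.Basis (Fin 2) ℤ Λ)
    (qhh : q (b 0) (b 0) = e) (qhf : q (b 0) (b 1) = d) (qfh : q (b 1) (b 0) = d)
    (qff : q (b 1) (b 1) = 0) (hd : d ≠ 0) {α : Λ}
    (hα : (Int.gcd (2 * d) e : ℤ) • α = (2 * d) • b 0 - e • b 1) {γ : Λ} (hγ : q γ γ = 0) :
    (∃ m : ℤ, γ = m • b 1) ∨ ∃ m : ℤ, γ = m • α := by
  obtain ⟨x, y, rfl⟩ := b.exists_eq_zsmul_add_zsmul γ
  rw [apply_zsmul_add_zsmul_self q qhh qhf qfh qff] at hγ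
  rcases mul_eq_zero.mp hγ with rfl | hxy
  · exact .inl ⟨y, by rw [zero_zsmul, zero_add]⟩
  · have h2d : 2 * d ≠ 0 := mul_ne_zero two_ne_zero hd
    obtain ⟨m, rfl, rfl⟩ := Int.exists_eq_mul_ediv_gcd_of_mul_add_mul_eq_zero h2d hxy
    refine .inr ⟨m, ?_⟩
    rw [eq_ediv_gcd_zsmul_sub_ediv_gcd_zsmul h2d hα, zsmul_sub, neg_zsmul, mul_zsmul, mul_zsmul,
      sub_eq_add_neg]

theorem apply_eq_mul_ediv_gcd (qhh : q h h = e) (qfh : q f h = d) (hd : d ≠ 0) {α : Λ}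
    (hα : (Int.gcd (2 * d) e : ℤ) • α = (2 * d) • h - e • f) :
    q α h = d * e / (Int.gcd (2 * d) e : ℤ) := by
  have hg0 : (Int.gcd (2 * d) e : ℤ) ≠ 0 := by
    exact_mod_cast (Int.gcd_pos_of_ne_zero_left e (mul_ne_zero two_ne_zero hd)).ne'
  have hαh := congrArg (q · h) hα
  simp only [map_sub, map_zsmul, LinearMap.sub_apply, LinearMap.smul_apply, smul_eq_mul,
    qhh, qfh] at hαh
  exact (Int.ediv_eq_of_eq_mul_left hg0 (by linear_combination -hαh)).symm

end

/-- Let `Λ = ℤh ⊕ ℤf` be a rank-2 lattice with symmetric bilinear form `q`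
determined by `q(h,h) = e`, `q(h,f) = d > 0`, `q(f,f) = 0`. Set `g := gcd(2d, e)` and
`α := (1/g)(2d·h − e·f)`. Then (1) every isotropic vector is an integer multiple of `f`
or of `α`; (2) `q(α,h) = d·e/g`; (3) if `e ∤ 2d` then `f` is the unique isotropic vector
`γ` with `q(γ,h) = d`. -/
theorem stmt1 (Λ : Type*) [AddCommGroup Λ] [Module ℤ Λ]
    (q : Λ →ₗ[ℤ] Λ →ₗ[ℤ] ℤ)
    (hsymm : ∀ x y : Λ, q x y = q y x)
    (b : Module.Basis (Fin 2) ℤ Λ) (h f : Λ)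
    (hbh : b 0 = h) (hbf : b 1 = f)
    (e d : ℤ) (hd : 0 < d)
    (qhh : q h h = e) (qhf : q h f = d) (qff : q f f = 0)
    (α : Λ) (hα : (Int.gcd (2 * d) e : ℤ) • α = (2 * d) • h - e • f) :
    (∀ γ : Λ, q γ γ = 0 → (∃ m : ℤ, γ = m • f) ∨ (∃ m : ℤ, γ = m • α)) ∧
    (q α h = d * e / (Int.gcd (2 * d) e : ℤ)) ∧
    (¬ (e ∣ 2 * d) → q f h = d ∧ ∀ γ : Λ, q γ γ = 0 → q γ h = d → γ = f) := by
  subst hbh hbf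
  have : Module.Free ℤ Λ := .of_basis b
  have : IsAddTorsionFree Λ := .of_isTorsionFree ℤ Λ
  have qfh : q (b 1) (b 0) = d := by rw [hsymm, qhf]
  have isotropic γ (hγ : q γ γ = 0) :=
    eq_zsmul_or_eq_zsmul_of_apply_self_eq_zero q b qhh qhf qfh qff hd.ne' hα hγ
  have qαh := apply_eq_mul_ediv_gcd q qhh qfh hd.ne' hα
  refine ⟨isotropic, qαh, fun he => ⟨qfh, fun γ hγ hγh => ?_⟩⟩
  obtain ⟨m, rfl⟩ | ⟨m, rfl⟩ := isotropic γ hγ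
  · rw [map_zsmul, LinearMap.smul_apply, qfh, smul_eq_mul, mul_eq_right₀ hd.ne'] at hγh
    rw [hγh, one_zsmul]
  · rw [map_zsmul, LinearMap.smul_apply, qαh, smul_eq_mul,
      Int.mul_ediv_assoc d (Int.gcd_dvd_right _ _), mul_left_comm] at hγh
    have hunit : m * (e / (Int.gcd (2 * d) e : ℤ)) = 1 := (mul_eq_left₀ hd.ne').mp hγh
    exact absurd (Int.dvd_of_isUnit_ediv_gcd (.of_mul_eq_one_right m hunit)) he
end

section
/- Let Λ = ℤh ⊕ ℤf be a rank-2 lattice with symmetric bilinear form q determined by q(h,h) = e > 0, q(h,f) = d > 0 and q(f,f) = 0. Let a be a positive rational number. If 2d > a(e+1), then there is no vector γ ∈ Λ with −a ≤ q(γ,γ) < 0; in particular there are no vectors of square −2 as soon as d > e + 1. -/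
/-! If `γ = m h + n f`, then `q(γ) = m k` with `k = m e + 2 n d`. A negative value forces
`m, n, k ≠ 0`, and `2 n d = k - m e` gives `2|d| ≤ |k| + |m| e ≤ (e + 1) |m| |k| = (e + 1) |q(γ)|`.
Hence every negative square has absolute value at least `2d / (e + 1)`, which exceeds `a`
when `2d > a(e + 1)`, and exceeds `2` when `d > e + 1`. -/

theorem LinearMap.apply_self_eq_of_basis_fin_two {R M : Type*} [CommRing R] [AddCommGroup M]
    [Module R M] (B : M →ₗ[R] M →ₗ[R] R) (b : Module.Basis (Fin 2) R M) (x : M) :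
    B x x = b.repr x 0 ^ 2 * B (b 0) (b 0)
      + b.repr x 0 * b.repr x 1 * (B (b 0) (b 1) + B (b 1) (b 0))
      + b.repr x 1 ^ 2 * B (b 1) (b 1) := by
  conv_lhs => rw [← b.sum_repr x, Fin.sum_univ_two]
  simp only [map_add, map_smul, LinearMap.add_apply, LinearMap.smul_apply, smul_eq_mul]
  ring

theorem Int.two_mul_abs_le_of_binary_form_neg {e d m n : ℤ} (he : 0 ≤ e)
    (hneg : m ^ 2 * e + 2 * m * n * d < 0) :
    2 * |d| ≤ (e + 1) * -(m ^ 2 * e + 2 * m * n * d) := by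
  set k := m * e + 2 * n * d
  have hmk : m ^ 2 * e + 2 * m * n * d = m * k := by ring
  rw [hmk] at hneg ⊢
  have hm : 1 ≤ |m| := Int.one_le_abs (left_ne_zero_of_mul hneg.ne)
  have hk : 1 ≤ |k| := Int.one_le_abs (right_ne_zero_of_mul hneg.ne)
  have hn : 1 ≤ |n| := Int.one_le_abs <| by
    rintro rfl
    rw [← hmk] at hneg
    nlinarith [sq_nonneg m]
  have hd : 2 * |d| ≤ |k| + |m| * e :=
    calc 2 * |d| ≤ 2 * |d| * |n| := le_mul_of_one_le_right (by positivity) hn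
      _ = |k - m * e| := by
        rw [show k - m * e = 2 * n * d by ring, abs_mul, abs_mul, abs_two]; ring
      _ ≤ |k| + |m * e| := abs_sub _ _
      _ = |k| + |m| * e := by rw [abs_mul, abs_of_nonneg he]
  rw [← abs_of_neg hneg, abs_mul]
  nlinarith [mul_le_mul_of_nonneg_right hk (by positivity : 0 ≤ |m| * e)]

theorem stmt3_general (Λ : Type*) [AddCommGroup Λ] [Module ℤ Λ]
    (q : Λ →ₗ[ℤ] Λ →ₗ[ℤ] ℤ)
    (hsymm : ∀ x y : Λ, q x y = q y x)
    (b : Module.Basis (Fin 2) ℤ Λ) (h f : Λ)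
    (hbh : b 0 = h) (hbf : b 1 = f)
    (e d : ℤ) (he : 0 < e)
    (qhh : q h h = e) (qhf : q h f = d) (qff : q f f = 0)
    (a : ℚ) :
    (a * ((e : ℚ) + 1) < 2 * (d : ℚ) →
      ∀ γ : Λ, ¬ (-a ≤ (q γ γ : ℚ) ∧ (q γ γ : ℚ) < 0)) ∧
    (e + 1 < d → ∀ γ : Λ, q γ γ ≠ -2) := by
  have bound (γ : Λ) (hγ : q γ γ < 0) : 2 * d ≤ (e + 1) * -q γ γ := by
    have hform : q γ γ = b.repr γ 0 ^ 2 * e + 2 * b.repr γ 0 * b.repr γ 1 * d := by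
      rw [q.apply_self_eq_of_basis_fin_two b, hbh, hbf, hsymm f h, qhh, qhf, qff]
      ring
    rw [hform] at hγ ⊢
    calc 2 * d ≤ 2 * |d| := by linarith [le_abs_self d]
      _ ≤ _ := Int.two_mul_abs_le_of_binary_form_neg he.le hγ
  constructor
  · rintro had γ ⟨hlo, hneg⟩
    have hbound : (2 * d : ℚ) ≤ (e + 1) * -(q γ γ : ℚ) := by
      exact_mod_cast bound γ (by exact_mod_cast hneg)
    have he' : (0 : ℚ) ≤ e + 1 := by positivity
    nlinarith [mul_le_mul_of_nonneg_left (neg_le.mp hlo) he']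
  · intro hed γ hγ
    have hbound := bound γ (by omega)
    rw [hγ] at hbound
    omega

/-- Let `Λ = ℤh ⊕ ℤf` be a rank-2 lattice with `q(h,h) = e > 0`,
`q(h,f) = d > 0`, `q(f,f) = 0`, and let `a` be a positive rational. If `2d > a(e+1)`
then there is no `γ ∈ Λ` with `−a ≤ q(γ,γ) < 0`; in particular there are no vectors of
square `−2` as soon as `d > e + 1`. -/
theorem stmt3 (Λ : Type*) [AddCommGroup Λ] [Module ℤ Λ]
    (q : Λ →ₗ[ℤ] Λ →ₗ[ℤ] ℤ)
    (hsymm : ∀ x y : Λ, q x y = q y x)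
    (b : Module.Basis (Fin 2) ℤ Λ) (h f : Λ)
    (hbh : b 0 = h) (hbf : b 1 = f)
    (e d : ℤ) (he : 0 < e) (hd : 0 < d)
    (qhh : q h h = e) (qhf : q h f = d) (qff : q f f = 0)
    (a : ℚ) (ha : 0 < a) :
    (a * ((e : ℚ) + 1) < 2 * (d : ℚ) →
      ∀ γ : Λ, ¬ (-a ≤ (q γ γ : ℚ) ∧ (q γ γ : ℚ) < 0)) ∧
    (e + 1 < d → ∀ γ : Λ, q γ γ ≠ -2) :=
  stmt3_general Λ q hsymm b h f hbh hbf e d he qhh qhf qff a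
end

section
/- Let K be a field of characteristic zero, V a K-vector space, q : V × V → K a symmetric bilinear form, d ∈ K, and n ≥ 2 an integer. Let G : V^{2n−2} → K be a symmetric (2n−2)-multilinear map such that G(α, α, …, α) = d · (2n−3)!! · q(α,α)^{n−1} for every α ∈ V, where (2n−3)!! := (2n−2)!/(2^{n−1} · (n−1)!). Let f ∈ V satisfy q(f,f) = 0. Then for every ω ∈ V one has G(ω, …, ω, f, …, f) = 0, where ω occurs n−2 times and f occurs n times. -/
/-!
Restricting `G` to the line `t ↦ t • ω + f` gives a polynomial in `t` whose coefficient of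
`t ^ k` is `(2n-2).choose k` times the value of `G` on `k` copies of `ω` and `2n-2-k` copies of
`f`. By the diagonal formula this polynomial is `d (2n-3)!! q(tω + f, tω + f) ^ (n-1)`, and since
`q(f, f) = 0` the quadratic `q(tω + f, tω + f)` is divisible by `t`. Hence `t ^ (n-1)` divides the
polynomial, its coefficient of `t ^ (n-2)` vanishes, and in characteristic zero so does the
binomial multiple of `G(ω, …, ω, f, …, f)`.
-/

open Finset Polynomial

theorem apply_piecewise_const_eq_of_card_eq {ι α β : Type*} [DecidableEq ι]
    (F : (ι → α) → β) (hF : ∀ (σ : Equiv.Perm ι) (v : ι → α), F (v ∘ σ) = F v)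
    (x y : α) {s t : Finset ι} (h : #s = #t) :
    F (s.piecewise (fun _ => x) (fun _ => y)) = F (t.piecewise (fun _ => x) (fun _ => y)) := by
  obtain ⟨σ, rfl⟩ := Equiv.Perm.exists_map_finset_eq s t h
  rw [← hF σ ((s.map σ.toEmbedding).piecewise _ _)]
  congr 1
  ext i
  by_cases hi : i ∈ s <;> simp [Finset.piecewise, hi]

theorem apply_piecewise_const_eq_apply_ite_lt_card {m : ℕ} {α β : Type*}
    (F : (Fin m → α) → β) (hF : ∀ (σ : Equiv.Perm (Fin m)) (v : Fin m → α), F (v ∘ σ) = F v)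
    (x y : α) (s : Finset (Fin m)) :
    F (s.piecewise (fun _ => x) (fun _ => y)) = F (fun i => if (i : ℕ) < #s then x else y) := by
  have hcard : #s = #{i : Fin m | (i : ℕ) < #s} := by
    rw [Fin.card_filter_val_lt, min_eq_right (by simpa using s.card_le_univ)]
  rw [apply_piecewise_const_eq_of_card_eq F hF x y hcard]
  congr 1
  ext i
  simp [Finset.piecewise]

namespace MultilinearMap

section

variable {R V W : Type*} [CommSemiring R] [AddCommMonoid V] [Module R V]
  [AddCommMonoid W] [Module R W] {m : ℕ}

theorem map_smul_add_const_eq_sum_choose (G : MultilinearMap R (fun _ : Fin m => V) W)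
    (hG : ∀ (σ : Equiv.Perm (Fin m)) (v : Fin m → V), G (v ∘ σ) = G v) (t : R) (x y : V) :
    G (fun _ => t • x + y) =
      ∑ k ∈ Finset.range (m + 1),
        m.choose k • t ^ k • G (fun i => if (i : ℕ) < k then x else y) := by
  have hterm : ∀ s : Finset (Fin m), G (s.piecewise (fun _ => t • x) (fun _ => y)) =
      t ^ #s • G (fun i => if (i : ℕ) < #s then x else y) := by
    intro s
    rw [← apply_piecewise_const_eq_apply_ite_lt_card G hG, ← prod_const, ← G.map_piecewise_smul]
    congr 1
    ext i
    by_cases hi : i ∈ s <;> simp [hi]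
  calc G (fun _ => t • x + y)
      = ∑ s : Finset (Fin m), G (s.piecewise (fun _ => t • x) (fun _ => y)) :=
        G.map_add_univ _ _
    _ = ∑ s ∈ (univ : Finset (Fin m)).powerset,
          t ^ #s • G (fun i => if (i : ℕ) < #s then x else y) := by
        rw [powerset_univ]; exact sum_congr rfl fun s _ => hterm s
    _ = _ := by
        rw [sum_powerset_apply_card (fun k => t ^ k • G (fun i => if (i : ℕ) < k then x else y)),
          card_univ, Fintype.card_fin]

end

theorem choose_mul_map_ite_lt_eq_coeff {K V : Type*} [CommRing K] [IsDomain K]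
    [Infinite K] [AddCommMonoid V] [Module K V] {m : ℕ}
    (G : MultilinearMap K (fun _ : Fin m => V) K)
    (hG : ∀ (σ : Equiv.Perm (Fin m)) (v : Fin m → V), G (v ∘ σ) = G v) (x y : V) (p : K[X])
    (hp : ∀ t : K, G (fun _ => t • x + y) = p.eval t) {k : ℕ} (hk : k ≤ m) :
    (m.choose k : K) * G (fun i => if (i : ℕ) < k then x else y) = p.coeff k := by
  set P : K[X] := ∑ j ∈ Finset.range (m + 1),
    C ((m.choose j : K) * G (fun i => if (i : ℕ) < j then x else y)) * X ^ j
  have hP : P = p := Polynomial.funext fun t => by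
    simp only [P, ← hp, G.map_smul_add_const_eq_sum_choose hG, eval_finsetSum, eval_mul, eval_C,
      eval_pow, eval_X, smul_eq_mul, nsmul_eq_mul]
    exact sum_congr rfl fun j _ => by ring
  rw [← hP, finsetSum_coeff]
  simp only [coeff_C_mul_X_pow]
  rw [sum_ite_eq, if_pos (mem_range.mpr (by omega))]

end MultilinearMap

theorem stmt8_general (K V : Type*) [Field K] [CharZero K]
    [AddCommGroup V] [Module K V]
    (q : V →ₗ[K] V →ₗ[K] K)
    (d : K) (n : ℕ) (hn : 2 ≤ n)
    (G : MultilinearMap K (fun _ : Fin (2 * n - 2) => V) K)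
    (hsymm : ∀ (σ : Equiv.Perm (Fin (2 * n - 2))) (v : Fin (2 * n - 2) → V),
      G (v ∘ σ) = G v)
    (hdiag : ∀ α : V, G (fun _ => α) =
      d * ((Nat.factorial (2 * n - 2) / (2 ^ (n - 1) * Nat.factorial (n - 1)) : ℕ) : K) *
        (q α α) ^ (n - 1))
    (f : V) (hf : q f f = 0) :
    ∀ ω : V, G (fun i => if (i : ℕ) < n - 2 then ω else f) = 0 := by
  intro ω
  set c : K := d * ((Nat.factorial (2 * n - 2) / (2 ^ (n - 1) * Nat.factorial (n - 1)) : ℕ) : K)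
  set Q : K[X] := C c * (X * (C (q ω ω) * X + C (q ω f + q f ω))) ^ (n - 1)
  have hQ : ∀ t : K, G (fun _ => t • ω + f) = Q.eval t := fun t => by
    simp only [hdiag, Q, map_add, map_smul, LinearMap.add_apply, LinearMap.smul_apply, smul_eq_mul,
      hf, eval_mul, eval_pow, eval_add, eval_C, eval_X]
    ring
  have hQ_coeff : Q.coeff (n - 2) = 0 :=
    X_pow_dvd_iff.mp (dvd_mul_of_dvd_right (pow_dvd_pow_of_dvd (dvd_mul_right X _) _) _) _
      (by omega)
  have h := G.choose_mul_map_ite_lt_eq_coeff hsymm ω f Q hQ (by omega : n - 2 ≤ 2 * n - 2)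
  rw [hQ_coeff] at h
  exact (mul_eq_zero.mp h).resolve_left (Nat.cast_ne_zero.mpr (Nat.choose_pos (by omega)).ne')

/-- Let `n ≥ 2` and let `G : V^{2n−2} → K` be a symmetric
`(2n−2)`-multilinear map with `G(α,…,α) = d·(2n−3)!!·q(α,α)^{n−1}` for all `α`, where
`(2n−3)!! = (2n−2)!/(2^{n−1}·(n−1)!)`. Let `f` satisfy `q(f,f) = 0`. Then
`G(ω,…,ω,f,…,f) = 0`, where `ω` occurs `n−2` times and `f` occurs `n` times. -/
theorem stmt8 (K V : Type*) [Field K] [CharZero K]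
    [AddCommGroup V] [Module K V]
    (q : V →ₗ[K] V →ₗ[K] K) (hq : ∀ x y : V, q x y = q y x)
    (d : K) (n : ℕ) (hn : 2 ≤ n)
    (G : MultilinearMap K (fun _ : Fin (2 * n - 2) => V) K)
    (hsymm : ∀ (σ : Equiv.Perm (Fin (2 * n - 2))) (v : Fin (2 * n - 2) → V),
      G (v ∘ σ) = G v)
    (hdiag : ∀ α : V, G (fun _ => α) =
      d * ((Nat.factorial (2 * n - 2) / (2 ^ (n - 1) * Nat.factorial (n - 1)) : ℕ) : K) *
        (q α α) ^ (n - 1))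
    (f : V) (hf : q f f = 0) :
    ∀ ω : V, G (fun i => if (i : ℕ) < n - 2 then ω else f) = 0 :=
  stmt8_general K V q d n hn G hsymm hdiag f hf
end

section
/- Let K be a field of characteristic zero, V a K-vector space, q : V × V → K a symmetric bilinear form, c ∈ K, and n a positive integer. Let F : V^{2n} → K be a symmetric 2n-multilinear map such that F(α, α, …, α) = c · (2n−1)!! · q(α,α)^n for every α ∈ V, where (2n−1)!! := (2n)!/(2^n · n!). Then for all α₁, …, α_{2n} ∈ V one has F(α₁, …, α_{2n}) = (c / (2^n · n!)) · Σ_{σ ∈ S_{2n}} q(α_{σ(1)}, α_{σ(2)}) · q(α_{σ(3)}, α_{σ(4)}) · … · q(α_{σ(2n−1)}, α_{σ(2n)}), where the sum runs over all permutations σ of {1, …, 2n}. -/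
/-!
A symmetric multilinear map `F` in `m` variables is determined by its values on the diagonal:
by multilinearity and inclusion–exclusion over the set of indices that are hit,
`m! • F(v₁, …, vₘ) = ∑_{t ⊆ {1, …, m}} (-1)^|t| F(x_t, …, x_t)` with `x_t = ∑_{i ∉ t} vᵢ`
(the polarization formula). The symmetrization of `(α₁, …, α₂ₙ) ↦ ∏ₖ q(α₂ₖ₋₁, α₂ₖ)` is a
symmetric multilinear map with diagonal value `(2n)! q(α, α)ⁿ`, so after rescaling by
`c / (2ⁿ n!)` it has the same diagonal as `F`, and the two maps coincide.
-/

open Finset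
open scoped Nat

theorem Nat.two_pow_mul_factorial_dvd_factorial_two_mul (n : ℕ) : 2 ^ n * n ! ∣ (2 * n)! := by
  rcases n with _ | n
  · simp
  · rw [← doubleFactorial_two_mul, show 2 * (n + 1) = 2 * n + 1 + 1 by ring,
      factorial_eq_mul_doubleFactorial]
    exact dvd_mul_right _ _

theorem Equiv.Perm.sum_eq_sum_neg_one_pow_sum_piFinset_compl {ι M : Type*} [Fintype ι]
    [DecidableEq ι] [AddCommGroup M] (f : (ι → ι) → M) :
    ∑ σ : Equiv.Perm ι, f σ =
      ∑ t : Finset ι, (-1 : ℤ) ^ #t • ∑ r ∈ Fintype.piFinset fun _ => tᶜ, f r := by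
  let misses (j : ι) : Finset (ι → ι) := {r | ∀ i, r i ≠ j}
  have mem_inf_compl_misses (r : ι → ι) :
      r ∈ univ.inf (fun j => (misses j)ᶜ) ↔ Function.Surjective r := by
    simp [misses, mem_inf, Function.Surjective]
  have inf_misses (t : Finset ι) : t.inf misses = Fintype.piFinset fun _ => tᶜ := by
    ext r
    simp only [misses, mem_inf, mem_filter, mem_univ, true_and, Fintype.mem_piFinset, mem_compl]
    grind
  calc ∑ σ : Equiv.Perm ι, f σ = ∑ r ∈ univ.inf (fun j => (misses j)ᶜ), f r := by
        refine sum_bij (fun σ _ => ⇑σ) (fun σ _ => (mem_inf_compl_misses σ).2 σ.surjective)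
          (fun σ _ τ _ => DFunLike.coe_injective.eq_iff.1) (fun r hr => ?_) (fun _ _ => rfl)
        have hr := (mem_inf_compl_misses r).1 hr
        exact ⟨Equiv.ofBijective r ⟨Finite.injective_iff_surjective.2 hr, hr⟩, mem_univ _, rfl⟩
    _ = _ := by
        rw [inclusion_exclusion_sum_inf_compl, powerset_univ]
        simp only [inf_misses]

namespace MultilinearMap

variable {R M N ι : Type*} [CommSemiring R] [AddCommMonoid M] [Module R M] [Fintype ι]
  [DecidableEq ι]

section Polarization

variable [AddCommGroup N] [Module R N]

theorem sum_apply_comp_perm_eq_sum_neg_one_pow (F : MultilinearMap R (fun _ : ι => M) N)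
    (v : ι → M) :
    ∑ σ : Equiv.Perm ι, F (v ∘ σ) =
      ∑ t : Finset ι, (-1 : ℤ) ^ #t • F (fun _ => ∑ i ∈ tᶜ, v i) := by
  simp_rw [F.map_sum_finset]
  exact Equiv.Perm.sum_eq_sum_neg_one_pow_sum_piFinset_compl fun r => F (v ∘ r)

theorem factorial_card_smul_eq_sum_neg_one_pow {F : MultilinearMap R (fun _ : ι => M) N}
    (hF : ∀ (σ : Equiv.Perm ι) v, F (v ∘ σ) = F v) (v : ι → M) :
    (Fintype.card ι)! • F v = ∑ t : Finset ι, (-1 : ℤ) ^ #t • F (fun _ => ∑ i ∈ tᶜ, v i) := by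
  rw [← sum_apply_comp_perm_eq_sum_neg_one_pow]
  simp [hF, Fintype.card_perm]

theorem eq_of_apply_diagonal_eq [IsAddTorsionFree N] {F G : MultilinearMap R (fun _ : ι => M) N}
    (hF : ∀ (σ : Equiv.Perm ι) v, F (v ∘ σ) = F v) (hG : ∀ (σ : Equiv.Perm ι) v, G (v ∘ σ) = G v)
    (h : ∀ x, F (fun _ => x) = G (fun _ => x)) : F = G := by
  ext v
  apply nsmul_right_injective (Fintype.card ι).factorial_ne_zero
  simp only [factorial_card_smul_eq_sum_neg_one_pow hF, factorial_card_smul_eq_sum_neg_one_pow hG,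
    h]

end Polarization

variable [AddCommMonoid N] [Module R N]

def symmetrization (f : MultilinearMap R (fun _ : ι => M) N) :
    MultilinearMap R (fun _ : ι => M) N :=
  ∑ σ : Equiv.Perm ι, f.domDomCongr σ

theorem symmetrization_apply (f : MultilinearMap R (fun _ : ι => M) N) (v : ι → M) :
    f.symmetrization v = ∑ σ : Equiv.Perm ι, f (v ∘ σ) := by
  simp only [symmetrization, _root_.sum_apply, domDomCongr_apply]
  rfl

theorem symmetrization_apply_comp_perm (f : MultilinearMap R (fun _ : ι => M) N)
    (τ : Equiv.Perm ι) (v : ι → M) : f.symmetrization (v ∘ τ) = f.symmetrization v := by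
  simp only [symmetrization_apply]
  exact Fintype.sum_equiv (Equiv.mulLeft τ) _ _ fun σ => rfl

theorem symmetrization_apply_diagonal (f : MultilinearMap R (fun _ : ι => M) N) (x : M) :
    f.symmetrization (fun _ => x) = (Fintype.card ι)! • f (fun _ => x) := by
  simp [symmetrization_apply, Function.comp_def, Fintype.card_perm]

end MultilinearMap

def finSigmaFinTwoEquiv (n : ℕ) : (Σ _ : Fin n, Fin 2) ≃ Fin (2 * n) :=
  (Equiv.sigmaEquivProd _ _).trans (finProdFinEquiv.trans (finCongr (Nat.mul_comm n 2)))

theorem finSigmaFinTwoEquiv_apply (n : ℕ) (k : Fin n) (b : Fin 2) :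
    finSigmaFinTwoEquiv n ⟨k, b⟩ = ⟨2 * k + b, by omega⟩ :=
  Fin.ext <| by simp [finSigmaFinTwoEquiv, finProdFinEquiv_apply_val, add_comm]

namespace LinearMap

variable {R M N : Type*} [CommSemiring R] [AddCommMonoid M] [Module R M] [AddCommMonoid N]
  [Module R N]

def toMultilinearFinTwo (q : M →ₗ[R] M →ₗ[R] N) : MultilinearMap R (fun _ : Fin 2 => M) N :=
  uncurryLeft ((MultilinearMap.ofSubsingletonₗ R R M N (ι := Fin 1) 0).toLinearMap ∘ₗ q)

@[simp]
theorem toMultilinearFinTwo_apply (q : M →ₗ[R] M →ₗ[R] N) (v : Fin 2 → M) :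
    q.toMultilinearFinTwo v = q (v 0) (v 1) :=
  rfl

variable {A : Type*} [CommSemiring A] [Algebra R A]

def prodConsecutivePairs (q : M →ₗ[R] M →ₗ[R] A) (n : ℕ) :
    MultilinearMap R (fun _ : Fin (2 * n) => M) A :=
  ((MultilinearMap.mkPiAlgebra R (Fin n) A).compMultilinearMap
    fun _ => q.toMultilinearFinTwo).domDomCongr (finSigmaFinTwoEquiv n)

theorem prodConsecutivePairs_apply (q : M →ₗ[R] M →ₗ[R] A) (n : ℕ) (v : Fin (2 * n) → M) :
    q.prodConsecutivePairs n v =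
      ∏ k : Fin n, q (v ⟨2 * k, by omega⟩) (v ⟨2 * k + 1, by omega⟩) := by
  simp [prodConsecutivePairs, Sigma.curry, finSigmaFinTwoEquiv_apply,
    MultilinearMap.mkPiAlgebra_apply]

theorem prodConsecutivePairs_apply_diagonal (q : M →ₗ[R] M →ₗ[R] A) (n : ℕ) (x : M) :
    q.prodConsecutivePairs n (fun _ => x) = q x x ^ n := by
  simp [prodConsecutivePairs_apply]

end LinearMap

/-- polarized Fujiki relation: Let `F : V^{2n} → K` be a symmetric
`2n`-multilinear map with `F(α,…,α) = c·(2n−1)!!·q(α,α)^n` for all `α`, where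
`(2n−1)!! = (2n)!/(2^n·n!)`. Then for all `α₁,…,α_{2n}` one has
`F(α₁,…,α_{2n}) = (c/(2^n·n!))·Σ_{σ ∈ S_{2n}} Π_{k=1}^{n} q(α_{σ(2k−1)}, α_{σ(2k)})`. -/
theorem stmt9 (K V : Type*) [Field K] [CharZero K]
    [AddCommGroup V] [Module K V]
    (q : V →ₗ[K] V →ₗ[K] K)
    (c : K) (n : ℕ)
    (F : MultilinearMap K (fun _ : Fin (2 * n) => V) K)
    (hsymm : ∀ (σ : Equiv.Perm (Fin (2 * n))) (v : Fin (2 * n) → V), F (v ∘ σ) = F v)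
    (hdiag : ∀ α : V, F (fun _ => α) =
      c * ((Nat.factorial (2 * n) / (2 ^ n * Nat.factorial n) : ℕ) : K) * (q α α) ^ n) :
    ∀ α : Fin (2 * n) → V,
      F α = c / (((2 ^ n * Nat.factorial n : ℕ) : K)) *
        ∑ σ : Equiv.Perm (Fin (2 * n)), ∏ k : Fin n,
          q (α (σ ⟨2 * (k : ℕ), by have hk := k.isLt; omega⟩))
            (α (σ ⟨2 * (k : ℕ) + 1, by have hk := k.isLt; omega⟩)) := by
  intro α
  set G := (q.prodConsecutivePairs n).symmetrization
  have hD : ((2 ^ n * n ! : ℕ) : K) ≠ 0 := Nat.cast_ne_zero.2 (by positivity)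
  have hG_diag (x : V) : G (fun _ => x) = ((2 * n)! : K) * q x x ^ n := by
    rw [MultilinearMap.symmetrization_apply_diagonal, q.prodConsecutivePairs_apply_diagonal,
      Fintype.card_fin, nsmul_eq_mul]
  have hF : F = (c / ((2 ^ n * n ! : ℕ) : K)) • G := by
    refine MultilinearMap.eq_of_apply_diagonal_eq hsymm (fun σ v => ?_) fun x => ?_
    · rw [smul_apply, smul_apply, MultilinearMap.symmetrization_apply_comp_perm]
    · rw [hdiag, smul_apply, hG_diag, smul_eq_mul,
        Nat.cast_div (Nat.two_pow_mul_factorial_dvd_factorial_two_mul n) hD]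
      ring
  rw [hF, smul_apply, smul_eq_mul, MultilinearMap.symmetrization_apply]
  simp only [Function.comp_apply, q.prodConsecutivePairs_apply]
end
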